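/- arXiv:2404.01853 — 2 statements merged into one kernel-verified Lean document; each statement's English description precedes it below -/
import Mathlib

section
/- Let p and q be probability vectors on {1,...,k} and let δ_y be the one-hot probability vector at class y. Then JSD(p, δ_y) < JSD(q, δ_y) if and only if p_y > q_y. -/
/-!
Only the `y`-coordinate of `p` survives in `JSD(p, δ_y)`: every other coordinate `p j` sits
against a zero of `δ_y`, so its midpoint is `p j / 2` and it contributes exactly `p j * log 2`.
With `φ t = t log t` this gives `JSD(p, δ_y) = log 2 + (φ (p y) - φ (1 + p y)) / 2`, and
`t ↦ φ t - φ (1 + t)` is strictly decreasing on `[0, ∞)` since its derivative is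
`log t - log (1 + t) < 0`.
-/

open Finset

/-- Jensen-Shannon divergence between two probability vectors on `Fin k`.
Terms with `P j = 0` (resp. `Q j = 0`) vanish since they are multiplied by `0`. -/
noncomputable def JSD {k : ℕ} (P Q : Fin k → ℝ) : ℝ :=
  (1 / 2) * ∑ j, P j * Real.log (P j / ((P j + Q j) / 2)) +
  (1 / 2) * ∑ j, Q j * Real.log (Q j / ((P j + Q j) / 2))

/-- The one-hot probability vector at class `y`. -/
def oneHot {k : ℕ} (y : Fin k) : Fin k → ℝ := fun j => if j = y then 1 else 0

lemma mul_log_div_half (t : ℝ) : t * Real.log (t / (t / 2)) = t * Real.log 2 := by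
  rcases eq_or_ne t 0 with rfl | ht
  · simp
  · rw [div_div_eq_mul_div, mul_div_cancel_left₀ 2 ht]

lemma mul_log_div_half_add_one {t : ℝ} (ht : 0 ≤ t) :
    t * Real.log (t / ((t + 1) / 2)) =
      t * Real.log 2 + (t * Real.log t - t * Real.log (1 + t)) := by
  rcases ht.eq_or_lt with rfl | ht
  · simp
  · rw [div_div_eq_mul_div, add_comm t 1, Real.log_div (by positivity) (by positivity),
      Real.log_mul ht.ne' two_ne_zero]
    ring

lemma jsd_oneHot_eq {k : ℕ} (p : Fin k → ℝ) (hp0 : ∀ j, 0 ≤ p j) (hp1 : ∑ j, p j = 1)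
    (y : Fin k) :
    JSD p (oneHot y) =
      Real.log 2 + (p y * Real.log (p y) - (1 + p y) * Real.log (1 + p y)) / 2 := by
  have hp_terms : ∀ j, p j * Real.log (p j / ((p j + oneHot y j) / 2)) =
      p j * Real.log 2 + if j = y then p y * Real.log (p y) - p y * Real.log (1 + p y) else 0 := by
    intro j
    by_cases hj : j = y
    · subst hj
      simpa [oneHot] using mul_log_div_half_add_one (hp0 j)
    · simpa [oneHot, hj] using mul_log_div_half (p j)
  have hp_sum : ∑ j, p j * Real.log (p j / ((p j + oneHot y j) / 2)) =
      Real.log 2 + (p y * Real.log (p y) - p y * Real.log (1 + p y)) := by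
    simp only [hp_terms, sum_add_distrib, ← sum_mul, hp1, one_mul, sum_ite_eq', mem_univ, if_true]
  have hδ_sum : ∑ j, oneHot y j * Real.log (oneHot y j / ((p j + oneHot y j) / 2)) =
      Real.log 2 - Real.log (1 + p y) := by
    have h1 : (0 : ℝ) < 1 + p y := by linarith [hp0 y]
    simp only [oneHot, ite_mul, one_mul, zero_mul, sum_ite_eq', mem_univ, if_true]
    rw [one_div_div, add_comm (p y), Real.log_div two_ne_zero h1.ne']
  rw [JSD, hp_sum, hδ_sum]
  ring

lemma strictAntiOn_mul_log_sub_one_add_mul_log :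
    StrictAntiOn (fun t : ℝ => t * Real.log t - (1 + t) * Real.log (1 + t)) (Set.Ici 0) := by
  refine strictAntiOn_of_hasDerivWithinAt_neg (convex_Ici 0)
    (f' := fun t => (Real.log t + 1) - (Real.log (1 + t) + 1) * 1) ?_ ?_ ?_
  · exact (Real.continuous_mul_log.sub
      (Real.continuous_mul_log.comp (continuous_const.add continuous_id))).continuousOn
  · intro t ht
    rw [interior_Ici, Set.mem_Ioi] at ht
    exact ((Real.hasDerivAt_mul_log ht.ne').sub
      ((Real.hasDerivAt_mul_log (by positivity)).comp t
        ((hasDerivAt_id t).const_add 1))).hasDerivWithinAt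
  · intro t ht
    rw [interior_Ici, Set.mem_Ioi] at ht
    have : Real.log t < Real.log (1 + t) := Real.log_lt_log ht (by linarith)
    linarith

/-- For probability vectors `p, q`, one has `JSD(p, δ_y) < JSD(q, δ_y)` iff `p y > q y`. -/
theorem jsd_oneHot_lt_iff {k : ℕ} (p q : Fin k → ℝ)
    (hp0 : ∀ j, 0 ≤ p j) (hp1 : ∑ j, p j = 1)
    (hq0 : ∀ j, 0 ≤ q j) (hq1 : ∑ j, q j = 1) (y : Fin k) :
    JSD p (oneHot y) < JSD q (oneHot y) ↔ q y < p y := by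
  rw [jsd_oneHot_eq p hp0 hp1 y, jsd_oneHot_eq q hq0 hq1 y, add_lt_add_iff_left,
    div_lt_div_iff_of_pos_right two_pos]
  exact strictAntiOn_mul_log_sub_one_add_mul_log.lt_iff_gt (hp0 y) (hq0 y)
end

section
/- Let T ∈ ℝ^{k×k} be a row-stochastic matrix and suppose the softmax output of the classifier on a sample with clean class c is the row vector (T_{c1}, ..., T_{ck}). Then for any observed label ỹ and any class c ≠ ỹ, the strict inequality JSD((T_{ỹ1},...,T_{ỹk}), δ_ỹ) < JSD((T_{c1},...,T_{ck}), δ_ỹ) holds if and only if T_{ỹỹ} > T_{cỹ}. -/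
open Finset

/-!
Against a one-hot target `δ_y`, the JSD of a probability vector `P` depends on `P` only through
`t = P y`: it equals `log 2 + φ(t) / 2` with `φ(t) = t log t - (1 + t) log (1 + t)`. Since
`φ'(t) = log t - log (1 + t) < 0`, `φ` is strictly decreasing on `[0, ∞)`, so the divergence from
`δ_y` is strictly decreasing in the mass that `P` puts on `y`.
-/

open Real

noncomputable def jsdOneHotProfile (t : ℝ) : ℝ := t * log t - (1 + t) * log (1 + t)

theorem jsdOneHotProfile_strictAntiOn : StrictAntiOn jsdOneHotProfile (Set.Ici 0) := by
  refine strictAntiOn_of_deriv_neg (convex_Ici 0) ?_ fun x hx => ?_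
  · exact (continuous_mul_log.sub
      (continuous_mul_log.comp (continuous_const.add continuous_id))).continuousOn
  · rw [interior_Ici] at hx
    have hx0 : (0 : ℝ) < x := hx
    have hderiv : HasDerivAt jsdOneHotProfile (log x + 1 - (log (1 + x) + 1)) x := by
      have hshift := (hasDerivAt_mul_log (by positivity : 1 + x ≠ 0)).comp x
        ((hasDerivAt_id x).const_add 1)
      rw [mul_one] at hshift
      exact (hasDerivAt_mul_log hx0.ne').sub hshift
    rw [hderiv.deriv]
    linarith [log_lt_log hx0 (lt_one_add x)]

section

variable {k : ℕ}

theorem mul_log_div_half_add_oneHot (P : Fin k → ℝ) {y : Fin k} (hPy : 0 ≤ P y) (j : Fin k) :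
    P j * log (P j / ((P j + oneHot y j) / 2)) =
      P j * log 2 + if j = y then P y * log (P y) - P y * log (1 + P y) else 0 := by
  by_cases hj : j = y
  · subst hj
    rcases hPy.eq_or_lt with h0 | h0
    · simp [oneHot, ← h0]
    · have hratio : P j / ((P j + 1) / 2) = 2 * P j / (1 + P j) := by
        field_simp; ring
      rw [oneHot, if_pos rfl, hratio, log_div (by positivity) (by positivity),
        log_mul two_ne_zero h0.ne', if_pos rfl]
      ring
  · rcases eq_or_ne (P j) 0 with h0 | h0
    · simp [h0, hj]
    · rw [oneHot, if_neg hj, add_zero, div_div_eq_mul_div, mul_div_cancel_left₀ 2 h0, if_neg hj,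
        add_zero]

theorem oneHot_mul_log_div_half_add (P : Fin k → ℝ) {y : Fin k} (hPy : 0 ≤ P y) (j : Fin k) :
    oneHot y j * log (oneHot y j / ((P j + oneHot y j) / 2)) =
      if j = y then log 2 - log (1 + P y) else 0 := by
  by_cases hj : j = y
  · subst hj
    rw [oneHot, if_pos rfl, if_pos rfl, one_mul, one_div_div,
      log_div two_ne_zero (by linarith), add_comm]
  · simp [oneHot, hj]

theorem JSD_oneHot (P : Fin k → ℝ) (hP : ∑ j, P j = 1) {y : Fin k} (hPy : 0 ≤ P y) :
    JSD P (oneHot y) = log 2 + jsdOneHotProfile (P y) / 2 := by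
  rw [JSD, sum_congr rfl fun j _ => mul_log_div_half_add_oneHot P hPy j,
    sum_congr rfl fun j _ => oneHot_mul_log_div_half_add P hPy j,
    sum_add_distrib, ← sum_mul, hP, sum_ite_eq' univ y,
    sum_ite_eq' univ y, if_pos (mem_univ y), if_pos (mem_univ y),
    jsdOneHotProfile]
  ring

end

theorem jsd_clean_lt_noisy_iff_general {k : ℕ}
    (T : Fin k → Fin k → ℝ)
    (hT0 : ∀ i j, 0 ≤ T i j) (hT1 : ∀ i, ∑ j, T i j = 1)
    (ytil c : Fin k) :
    JSD (T ytil) (oneHot ytil) < JSD (T c) (oneHot ytil) ↔ T c ytil < T ytil ytil := by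
  rw [JSD_oneHot (T ytil) (hT1 ytil) (hT0 ytil ytil), JSD_oneHot (T c) (hT1 c) (hT0 c ytil),
    add_lt_add_iff_left, div_lt_div_iff_of_pos_right two_pos]
  exact jsdOneHotProfile_strictAntiOn.lt_iff_gt (hT0 ytil ytil) (hT0 c ytil)

/-- For a row-stochastic matrix `T` whose row `T c` is the softmax output on a sample with
clean class `c`, and any observed label `ytil` and class `c ≠ ytil`, one has
`JSD (T ytil) δ_ytil < JSD (T c) δ_ytil` iff `T ytil ytil > T c ytil`. -/
theorem jsd_clean_lt_noisy_iff {k : ℕ}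
    (T : Fin k → Fin k → ℝ)
    (hT0 : ∀ i j, 0 ≤ T i j) (hT1 : ∀ i, ∑ j, T i j = 1)
    (ytil c : Fin k) (hc : c ≠ ytil) :
    JSD (T ytil) (oneHot ytil) < JSD (T c) (oneHot ytil) ↔ T c ytil < T ytil ytil :=
  jsd_clean_lt_noisy_iff_general T hT0 hT1 ytil c
end
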